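/- Let m > 2 be an odd integer not divisible by 3. Then the integer N = 2m is monomially reducible (i.e., there is no monomially irreducible integer of the form 2m with such m). -/
import Mathlib


namespace Monomial

/-- The elementary matrix `[[a, -1], [1, 0]]` over `ZMod N`. -/
def mat {N : ℕ} (a : ZMod N) : Matrix (Fin 2) (Fin 2) (ZMod N) := !![a, -1; 1, 0]

/-- `M [a₁, …, aₙ] = mat aₙ * ⋯ * mat a₁`. -/
def M {N : ℕ} (l : List (ZMod N)) : Matrix (Fin 2) (Fin 2) (ZMod N) :=
  (l.reverse.map mat).prod

/-- A tuple is a solution of (E_N) if the associated matrix is `±Id`. -/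
def IsSolution {N : ℕ} (l : List (ZMod N)) : Prop := M l = 1 ∨ M l = -1

/-- The sum `(a₁,…,aₙ) ⊕ (b₁,…,bₘ) = (a₁+bₘ, a₂,…,aₙ₋₁, aₙ+b₁, b₂,…,bₘ₋₁)`. -/
def osum {N : ℕ} (u v : List (ZMod N)) : List (ZMod N) :=
  (u.headI + v.getLastD 0) ::
    ((u.drop 1).dropLast ++ (u.getLastD 0 + v.headI) :: (v.drop 1).dropLast)

/-- Equivalence: `v` is a cyclic permutation of `u` or of the reversal of `u`. -/
def CyclicEquiv {N : ℕ} (u v : List (ZMod N)) : Prop :=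
  (∃ i, v = u.rotate i) ∨ (∃ i, v = u.reverse.rotate i)

/-- A tuple is reducible if, up to equivalence, it is a sum of an `m`-tuple (`m ≥ 3`)
with a solution of size `l ≥ 3`. -/
def Reducible {N : ℕ} (c : List (ZMod N)) : Prop :=
  ∃ a b : List (ZMod N), 3 ≤ a.length ∧ 3 ≤ b.length ∧ IsSolution b ∧
    CyclicEquiv c (osum a b)

/-- An irreducible solution: a solution which is not reducible (and `(0,0)` is
not considered irreducible). -/
def IrreducibleSol {N : ℕ} (c : List (ZMod N)) : Prop :=
  IsSolution c ∧ ¬ Reducible c ∧ c ≠ [0, 0]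

/-- The size of the `k`-monomial minimal solution of (E_N): the least `n > 0` such
that the constant `n`-tuple `(k, …, k)` is a solution. -/
noncomputable def monomialMinimalSize (N : ℕ) (k : ZMod N) : ℕ :=
  sInf {n | 0 < n ∧ IsSolution (List.replicate n k)}

/-- `N` is monomially irreducible if, for every `k ≠ 0`, the `k`-monomial minimal
solution of (E_N) is irreducible. -/
def MonomiallyIrreducible (N : ℕ) : Prop :=
  ∀ k : ZMod N, k ≠ 0 → IrreducibleSol (List.replicate (monomialMinimalSize N k) k)

/-- The continuant `Kₙ(x, …, x)` at a constant tuple: `K₀ = 1`, `K₁ = x`,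
`Kₙ₊₂ = x * Kₙ₊₁ - Kₙ`. -/
def K {N : ℕ} (x : ZMod N) : ℕ → ZMod N
  | 0 => 1
  | 1 => x
  | n + 2 => x * K x (n + 1) - K x n

/- auxiliary lemmas -/
lemma M_append {N : ℕ} (u v : List (ZMod N)) : M (u ++ v) = M v * M u := by
  unfold M
  rw [List.reverse_append, List.map_append, List.prod_append]

lemma M_single {N : ℕ} (x : ZMod N) : M [x] = mat x := by
  simp [M]

lemma M_replicate {N : ℕ} (k : ZMod N) (n : ℕ) :
    M (List.replicate n k) = (mat k) ^ n := by
  unfold M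
  rw [List.reverse_replicate, List.map_replicate, List.prod_replicate]

lemma mat_pow {N : ℕ} (k : ZMod N) (n : ℕ) :
    (mat k) ^ (n + 2) = !![K k (n+2), -K k (n+1); K k (n+1), -K k n] := by
  induction n with
  | zero =>
    rw [show K k 2 = k * K k 1 - K k 0 from rfl, show K k 1 = k from rfl,
      show K k 0 = 1 from rfl, sq]
    unfold mat
    ext i j
    fin_cases i <;> fin_cases j <;>
      simp [Matrix.mul_apply, Fin.sum_univ_two] <;> ring
  | succ n ih =>
    show mat k ^ (n+3) = !![K k (n+3), -K k (n+2); K k (n+2), -K k (n+1)]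
    have h1 : mat k ^ (n+3) = mat k ^ (n+2) * mat k := pow_succ _ _
    rw [h1, ih, show K k (n+3) = k * K k (n+2) - K k (n+1) from rfl,
      show K k (n+2) = k * K k (n+1) - K k n from rfl]
    unfold mat
    ext i j
    fin_cases i <;> fin_cases j <;>
      simp [Matrix.mul_apply, Fin.sum_univ_two] <;> ring

lemma K_det {N : ℕ} (k : ZMod N) : ∀ t : ℕ,
    K k (t+2) * K k t = K k (t+1) * K k (t+1) - 1 := by
  intro t
  induction t with
  | zero =>
    rw [show K k 2 = k * K k 1 - K k 0 from rfl, show K k 1 = k from rfl,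
      show K k 0 = 1 from rfl]
    ring
  | succ t ih =>
    have e2 : K k (t+2) = k * K k (t+1) - K k t := rfl
    show K k (t+3) * K k (t+1) = K k (t+2) * K k (t+2) - 1
    rw [show K k (t+3) = k * K k (t+2) - K k (t+1) from rfl]
    linear_combination ih - K k (t+2) * e2

def E (j : ℕ) : ℕ := if j % 6 = 1 ∨ j % 6 = 2 ∨ j % 6 = 3 then 1 else 0

lemma K_formula (m : ℕ) (hmo : m % 2 = 1) (j : ℕ) :
    K ((m + 2 : ℕ) : ZMod (2*m)) j = ((j + 1 + m * E j : ℕ) : ZMod (2*m)) := by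
  obtain ⟨u, hu⟩ : ∃ u, m = 2*u + 1 := ⟨m/2, by omega⟩
  have h0 : ((2*m : ℕ) : ZMod (2*m)) = 0 := ZMod.natCast_self _
  have h0' : (2 : ZMod (2*m)) * ((m:ℕ) : ZMod (2*m)) = 0 := by
    push_cast at h0; exact h0
  have hsq : ((m:ℕ) : ZMod (2*m)) * ((m:ℕ) : ZMod (2*m)) = ((m:ℕ) : ZMod (2*m)) := by
    have hn : m * m = 2*m*u + m := by rw [hu]; ring
    have h2 : ((m*m : ℕ) : ZMod (2*m)) = (((2*m*u + m) : ℕ) : ZMod (2*m)) := by rw [hn]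
    push_cast at h2
    rw [h2, show ((2:ZMod (2*m)) * m * u) = (2 * ((m:ℕ):ZMod (2*m))) * u by push_cast; ring,
      h0']
    ring
  set kk : ZMod (2*m) := ((m + 2 : ℕ) : ZMod (2*m)) with hkk
  suffices h : ∀ j, K kk j = ((j + 1 + m * E j : ℕ) : ZMod (2*m)) ∧
      K kk (j+1) = ((j + 2 + m * E (j+1) : ℕ) : ZMod (2*m)) by
    exact (h j).1
  intro j
  induction j with
  | zero =>
    constructor
    · show (1 : ZMod (2*m)) = _
      simp [E]
    · show kk = _
      rw [hkk]
      simp only [E, show (1:ℕ) % 6 = 1 from rfl]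
      norm_num
      push_cast
      ring
  | succ n ih =>
    obtain ⟨h1, h2⟩ := ih
    refine ⟨h2, ?_⟩
    show kk * K kk (n+1) - K kk n = ((n + 3 + m * E (n+2) : ℕ) : ZMod (2*m))
    rw [h1, h2, hkk]
    obtain ⟨q, r, hr6, rfl⟩ : ∃ q r, r < 6 ∧ n = 6*q + r :=
      ⟨n/6, n%6, by omega, by omega⟩
    interval_cases r <;>
      simp only [E] <;>
      [ (rw [if_pos (by omega), if_neg (by omega), if_pos (by omega)]);
        (rw [if_pos (by omega), if_pos (by omega), if_pos (by omega)]);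
        (rw [if_pos (by omega), if_pos (by omega), if_neg (by omega)]);
        (rw [if_neg (by omega), if_pos (by omega), if_neg (by omega)]);
        (rw [if_neg (by omega), if_neg (by omega), if_neg (by omega)]);
        (rw [if_neg (by omega), if_neg (by omega), if_pos (by omega)]) ] <;>
      push_cast <;>
      [ (linear_combination (3*(q : ZMod (2*m)) + 2) * h0' + hsq);
        (linear_combination (3*(q : ZMod (2*m)) + 2) * h0' + hsq);
        (linear_combination (3*(q : ZMod (2*m)) + 3) * h0' + hsq);
        (linear_combination (3*(q : ZMod (2*m)) + 2) * h0');
        (linear_combination (3*(q : ZMod (2*m)) + 3) * h0');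
        (linear_combination (3*(q : ZMod (2*m)) + 3) * h0') ]

lemma reducible_replicate {N : ℕ} (k : ZMod N) (t d : ℕ) (hd : 1 ≤ d)
    (h1 : K k (t+2) = 1) :
    Reducible (List.replicate (t + d + 4) k) := by
  have hKt : K k t = K k (t+1) * K k (t+1) - 1 := by
    have h := K_det k t
    rw [h1, one_mul] at h
    exact h
  refine ⟨(k - K k (t+1)) :: (List.replicate d k ++ [k - K k (t+1)]),
          K k (t+1) :: (List.replicate (t+2) k ++ [K k (t+1)]), ?_, ?_, ?_, ?_⟩
  · simp only [List.length_cons, List.length_append, List.length_replicate]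
    omega
  · simp only [List.length_cons, List.length_append, List.length_replicate]
    omega
  · right
    have hb : K k (t+1) :: (List.replicate (t+2) k ++ [K k (t+1)])
        = ([K k (t+1)] ++ List.replicate (t+2) k) ++ [K k (t+1)] := by simp
    rw [hb, M_append, M_append, M_single, M_replicate, mat_pow, h1, hKt]
    ext i j
    fin_cases i <;> fin_cases j <;>
      simp [mat, Matrix.mul_apply, Fin.sum_univ_two, Matrix.one_apply] <;> ring
  · left
    refine ⟨0, ?_⟩
    rw [List.rotate_zero]
    unfold osum
    simp only [List.headI, List.drop, List.getLastD_cons, List.getLastD_concat,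
      List.dropLast_concat]
    rw [show (k - K k (t+1)) + K k (t+1) = k by ring]
    refine List.eq_replicate_iff.mpr ⟨?_, ?_⟩
    · simp only [List.length_cons, List.length_append, List.length_replicate]
      omega
    · intro b hb
      simp only [List.mem_cons, List.mem_append, List.mem_replicate] at hb
      tauto

theorem stmt17 (m : ℕ) (hm : 2 < m) (hmo : Odd m) (hm3 : ¬ (3 ∣ m)) :
    ¬ MonomiallyIrreducible (2 * m) := by
  intro H
  have hm2 : m % 2 = 1 := Nat.odd_iff.mp hmo
  have hm3' : m % 3 ≠ 0 := fun h => hm3 (Nat.dvd_of_mod_eq_zero h)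
  haveI : NeZero (2*m) := ⟨by omega⟩
  haveI : Fact (1 < 2*m) := ⟨by omega⟩
  set kk : ZMod (2*m) := ((m + 2 : ℕ) : ZMod (2*m)) with hkk
  have hKf := K_formula m hm2
  have castEq : ∀ a b : ℕ, a % (2*m) = b % (2*m) →
      ((a : ℕ) : ZMod (2*m)) = ((b : ℕ) : ZMod (2*m)) :=
    fun a b h => (ZMod.natCast_eq_natCast_iff _ _ _).mpr h
  have hkk0 : kk ≠ 0 := by
    rw [hkk, Ne, ZMod.natCast_eq_zero_iff]
    intro hdvd
    exact absurd (Nat.le_of_dvd (by omega) hdvd) (by omega)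
  -- key values of K
  have f1 : K kk (3*m-1) = 0 := by
    rw [hKf, show E (3*m-1) = 1 by unfold E; rw [if_pos (by omega)],
      ZMod.natCast_eq_zero_iff]
    exact ⟨2, by omega⟩
  have f2 : K kk (3*m) = 1 := by
    rw [hKf, show E (3*m) = 1 by unfold E; rw [if_pos (by omega)],
      castEq (3*m + 1 + m*1) 1 (by rw [show 3*m + 1 + m*1 = 1 + 2*m*2 by omega]; exact Nat.add_mul_mod_self_left 1 (2*m) 2), Nat.cast_one]
  have f3 : K kk (3*m-2) = -1 := by
    rw [hKf, show E (3*m-2) = 1 by unfold E; rw [if_pos (by omega)]]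
    have h4 : (((3*m-2) + 1 + m*1 : ℕ) : ZMod (2*m)) + ((1:ℕ) : ZMod (2*m))
        = ((4*m : ℕ) : ZMod (2*m)) := by
      rw [← Nat.cast_add]
      congr 1
      omega
    have h5 : ((4*m : ℕ) : ZMod (2*m)) = 0 := by
      rw [ZMod.natCast_eq_zero_iff]
      exact ⟨2, by omega⟩
    rw [h5] at h4
    rw [Nat.cast_one] at h4
    linear_combination h4
  have f4 : ∀ t : ℕ, 0 < t → K kk (t-1) = 0 → m ∣ t := by
    intro t ht h
    rw [hKf] at h
    have h2 := congrArg (ZMod.castHom (dvd_mul_left m 2) (ZMod m)) h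
    rw [map_natCast, map_zero] at h2
    haveI : NeZero m := ⟨by omega⟩
    rw [ZMod.natCast_eq_zero_iff] at h2
    rw [show (t-1) + 1 + m * E (t-1) = m * E (t-1) + t by omega] at h2
    exact (Nat.dvd_add_right (dvd_mul_right m _)).mp h2
  have f5 : K kk (m-1) ≠ 0 := by
    rw [hKf, show E (m-1) = 0 by unfold E; rw [if_neg (by omega)],
      show (m-1) + 1 + m*0 = m by omega, Ne, ZMod.natCast_eq_zero_iff]
    intro hd
    exact absurd (Nat.le_of_dvd (by omega) hd) (by omega)
  have f6 : K kk (2*m-1) ≠ 0 := by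
    rw [hKf, show E (2*m-1) = 1 by unfold E; rw [if_pos (by omega)],
      show (2*m-1) + 1 + m*1 = 3*m by omega, Ne, ZMod.natCast_eq_zero_iff]
    intro hd
    have h5 := Nat.dvd_sub hd (dvd_refl (2*m))
    rw [show 3*m - 2*m = m by omega] at h5
    exact absurd (Nat.le_of_dvd (by omega) h5) (by omega)
  -- the solution of size 3m
  have hsol : IsSolution (List.replicate (3*m) kk) := by
    refine Or.inl ?_
    rw [M_replicate, show 3*m = (3*m-2)+2 by omega, mat_pow,
      show (3*m-2)+2 = 3*m by omega, show (3*m-2)+1 = 3*m-1 by omega, f1, f2, f3]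
    ext i j
    fin_cases i <;> fin_cases j <;> simp [Matrix.one_apply]
  -- minimality
  have hmin : ∀ t, 0 < t → t < 3*m → ¬ IsSolution (List.replicate t kk) := by
    intro t ht ht3 hs
    unfold IsSolution at hs
    rw [M_replicate] at hs
    rcases Nat.lt_or_ge t 2 with hlt | hge
    · interval_cases t
      rcases hs with h | h <;>
      · have h10 := congrArg (fun A => A 1 0) h
        simp [pow_one, mat, Matrix.one_apply] at h10
    · obtain ⟨s, rfl⟩ : ∃ s, t = s + 2 := ⟨t - 2, by omega⟩
      rw [mat_pow] at hs
      have hz : K kk (s+1) = 0 := by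
        rcases hs with h | h <;>
        · have h10 := congrArg (fun A => A 1 0) h
          simpa [Matrix.one_apply] using h10
      have hdvd : m ∣ s + 2 := f4 (s+2) (by omega) hz
      obtain ⟨c, hc⟩ := hdvd
      have hc3 : c < 3 := by
        by_contra hc3
        push_neg at hc3
        have h3 : m * 3 ≤ m * c := Nat.mul_le_mul_left m hc3
        omega
      interval_cases c
      · omega
      · exact f5 (by rw [show m - 1 = s+1 by omega]; exact hz)
      · exact f6 (by rw [show 2*m - 1 = s+1 by omega]; exact hz)
  -- computing the minimal size
  have hsize : monomialMinimalSize (2*m) kk = 3*m := by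
    unfold monomialMinimalSize
    have hmem : 3*m ∈ {n | 0 < n ∧ IsSolution (List.replicate n kk)} := ⟨by omega, hsol⟩
    have hle := Nat.sInf_le hmem
    obtain ⟨hpos, hsolInf⟩ := Nat.sInf_mem (Set.nonempty_of_mem hmem)
    rcases lt_or_eq_of_le hle with hltc | heq
    · exact absurd hsolInf (hmin _ hpos hltc)
    · exact heq
  -- reducibility
  have hm6 : m % 6 = 1 ∨ m % 6 = 5 := by omega
  have hred : Reducible (List.replicate (3*m) kk) := by
    rcases hm6 with h6 | h6
    · have hK1 : K kk ((m-2)+2) = 1 := by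
        rw [show (m-2)+2 = m by omega, hKf,
          show E m = 1 by unfold E; rw [if_pos (by omega)],
          castEq (m + 1 + m*1) 1 (by rw [show m + 1 + m*1 = 1 + 2*m*1 by omega]; exact Nat.add_mul_mod_self_left 1 (2*m) 1), Nat.cast_one]
      have h := reducible_replicate kk (m-2) (2*m-2) (by omega) hK1
      rwa [show (m-2) + (2*m-2) + 4 = 3*m by omega] at h
    · have hK1 : K kk ((2*m-2)+2) = 1 := by
        rw [show (2*m-2)+2 = 2*m by omega, hKf,
          show E (2*m) = 0 by unfold E; rw [if_neg (by omega)],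
          castEq (2*m + 1 + m*0) 1 (by rw [show 2*m + 1 + m*0 = 1 + 2*m*1 by omega]; exact Nat.add_mul_mod_self_left 1 (2*m) 1), Nat.cast_one]
      have h := reducible_replicate kk (2*m-2) (m-2) (by omega) hK1
      rwa [show (2*m-2) + (m-2) + 4 = 3*m by omega] at h
  have h := H kk hkk0
  rw [hsize] at h
  exact h.2.1 hred

end Monomial
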